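/- Let U be binomially distributed with parameters n and p, where n ≥ 1 and 0 < p < 1, and let k > 0 be a real number. Then E[U^k] ≤ exp(k²/(2 n p)) · (n p)^k. In particular, if n p ≥ α k² for some α > 0, then E[U^k] ≤ e^{1/(2α)} (n p)^k. -/

import Mathlib

/-!
For every `t > 0` the elementary bound `log y ≤ y - 1` gives `x ^ k ≤ (k / t) ^ k * exp (t x - k)`,
so the `k`-th moment is controlled by the moment generating function
`(1 + p (eᵗ - 1)) ^ n ≤ exp (n p (eᵗ - 1))`. Choosing `eᵗ = 1 + k / (n p)` cancels the exponential
factor and leaves `(k / log (1 + k / (n p))) ^ k`; finally `log (1 + x) ≥ 2x / (2 + x) ≥ x e^{-x/2}`.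
-/

open Real Finset MeasureTheory

section Law

variable {Ω : Type*} [MeasurableSpace Ω] {μ : Measure Ω}

lemma map_eq_sum_dirac_of_measure_eq {U : Ω → ℕ} (hU : Measurable U) {s : Finset ℕ}
    {w : ℕ → ENNReal} (hlaw : ∀ m, μ {ω | U ω = m} = w m) (hs : ∀ m ∉ s, w m = 0) :
    μ.map U = ∑ m ∈ s, w m • Measure.dirac m := by
  refine Measure.ext_of_singleton fun a => ?_
  rw [Measure.map_apply hU (measurableSet_singleton a), Measure.coe_finsetSum, Finset.sum_apply]
  simp only [Measure.smul_apply, Measure.dirac_apply, Set.indicator_apply, Set.mem_singleton_iff,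
    Pi.one_apply, smul_eq_mul, mul_ite, mul_one, mul_zero, Finset.sum_ite_eq']
  split_ifs with ha
  · exact hlaw a
  · exact (hlaw a).trans (hs a ha)

lemma integral_comp_eq_sum_of_measure_eq {U : Ω → ℕ} (hU : Measurable U) {s : Finset ℕ}
    {w : ℕ → ℝ} (hw : ∀ m, 0 ≤ w m) (hlaw : ∀ m, μ {ω | U ω = m} = ENNReal.ofReal (w m))
    (hs : ∀ m ∉ s, w m = 0) (f : ℕ → ℝ) :
    ∫ ω, f (U ω) ∂μ = ∑ m ∈ s, w m * f m := by
  rw [← integral_map hU.aemeasurable Measurable.of_discrete.aestronglyMeasurable,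
    map_eq_sum_dirac_of_measure_eq (s := s) hU hlaw (fun m hm => by simp [hs m hm]),
    integral_finsetSum_measure fun m _ =>
      (integrable_dirac (by simp)).smul_measure ENNReal.ofReal_ne_top]
  simp [integral_smul_measure, ENNReal.toReal_ofReal (hw _)]

end Law

section Binomial

variable (n : ℕ) {p : ℝ}

def binomialWeight (n : ℕ) (p : ℝ) (m : ℕ) : ℝ :=
  n.choose m * p ^ m * (1 - p) ^ (n - m)

lemma binomialWeight_nonneg (hp : 0 ≤ p) (hp1 : p ≤ 1) (m : ℕ) : 0 ≤ binomialWeight n p m := by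
  unfold binomialWeight
  have : 0 ≤ 1 - p := by linarith
  positivity

lemma binomialWeight_eq_zero_of_lt {m : ℕ} (hm : n < m) : binomialWeight n p m = 0 := by
  simp [binomialWeight, Nat.choose_eq_zero_of_lt hm]

lemma sum_binomialWeight_mul_exp (t : ℝ) :
    ∑ m ∈ range (n + 1), binomialWeight n p m * exp (t * m) = (1 + p * (exp t - 1)) ^ n := by
  rw [show 1 + p * (exp t - 1) = p * exp t + (1 - p) by ring, add_pow]
  refine sum_congr rfl fun m _ => ?_
  rw [binomialWeight, mul_pow, ← exp_nat_mul, mul_comm t]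
  ring

lemma sum_binomialWeight_mul_exp_le (hp : 0 ≤ p) {t : ℝ} (ht : 0 ≤ t) :
    ∑ m ∈ range (n + 1), binomialWeight n p m * exp (t * m) ≤ exp (n * p * (exp t - 1)) := by
  have hx : 0 ≤ p * (exp t - 1) := mul_nonneg hp (by linarith [one_le_exp ht])
  rw [sum_binomialWeight_mul_exp, mul_assoc, exp_nat_mul, add_comm]
  exact pow_le_pow_left₀ (by linarith) (add_one_le_exp _) n

lemma rpow_le_div_rpow_mul_exp {x k t : ℝ} (hx : 0 ≤ x) (hk : 0 < k) (ht : 0 < t) :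
    x ^ k ≤ (k / t) ^ k * exp (t * x - k) :=
  calc x ^ k = (k / t * (t * x / k)) ^ k := by congr 1; field_simp
    _ = (k / t) ^ k * (t * x / k) ^ k := mul_rpow (by positivity) (by positivity)
    _ ≤ (k / t) ^ k * exp (t * x / k - 1) ^ k := by
        gcongr
        linarith [add_one_le_exp (t * x / k - 1)]
    _ = (k / t) ^ k * exp (t * x - k) := by
        rw [← exp_mul]
        congr 2
        field_simp

lemma sum_binomialWeight_mul_rpow_le (hp : 0 ≤ p) (hp1 : p ≤ 1) {k t : ℝ} (hk : 0 < k)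
    (ht : 0 < t) :
    ∑ m ∈ range (n + 1), binomialWeight n p m * (m : ℝ) ^ k
      ≤ (k / t) ^ k * exp (n * p * (exp t - 1) - k) :=
  calc ∑ m ∈ range (n + 1), binomialWeight n p m * (m : ℝ) ^ k
      ≤ ∑ m ∈ range (n + 1), binomialWeight n p m * ((k / t) ^ k * exp (t * m - k)) :=
        sum_le_sum fun m _ => mul_le_mul_of_nonneg_left
          (rpow_le_div_rpow_mul_exp m.cast_nonneg hk ht) (binomialWeight_nonneg n hp hp1 m)
    _ = (k / t) ^ k * exp (-k) * ∑ m ∈ range (n + 1), binomialWeight n p m * exp (t * m) := by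
        rw [mul_sum]
        refine sum_congr rfl fun m _ => ?_
        rw [sub_eq_add_neg, exp_add]
        ring
    _ ≤ (k / t) ^ k * exp (-k) * exp (n * p * (exp t - 1)) := by
        gcongr
        exact sum_binomialWeight_mul_exp_le n hp ht.le
    _ = (k / t) ^ k * exp (n * p * (exp t - 1) - k) := by
        rw [mul_assoc, ← exp_add, neg_add_eq_sub]

lemma le_exp_half_mul_log_one_add {x : ℝ} (hx : 0 ≤ x) : x ≤ exp (x / 2) * log (1 + x) :=
  calc x = (1 + x / 2) * (2 * x / (x + 2)) := by field_simp; ring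
    _ ≤ exp (x / 2) * log (1 + x) := by
        gcongr
        · linarith [add_one_le_exp (x / 2)]
        · exact le_log_one_add_of_nonneg hx

lemma sum_binomialWeight_mul_rpow_le_exp_mul (hn : 1 ≤ n) (hp : 0 < p) (hp1 : p ≤ 1) {k : ℝ}
    (hk : 0 < k) :
    ∑ m ∈ range (n + 1), binomialWeight n p m * (m : ℝ) ^ k
      ≤ exp (k ^ 2 / (2 * n * p)) * ((n : ℝ) * p) ^ k := by
  have hc : 0 < (n : ℝ) * p := mul_pos (by exact_mod_cast hn) hp
  set c := (n : ℝ) * p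
  have hκ : 0 < k / c := by positivity
  have ht : 0 < log (1 + k / c) := log_pos (by linarith)
  calc ∑ m ∈ range (n + 1), binomialWeight n p m * (m : ℝ) ^ k
      ≤ (k / log (1 + k / c)) ^ k * exp (c * (exp (log (1 + k / c)) - 1) - k) :=
        sum_binomialWeight_mul_rpow_le n hp.le hp1 hk ht
    _ = (k / log (1 + k / c)) ^ k := by
        rw [exp_log (by linarith), add_sub_cancel_left, mul_div_cancel₀ _ hc.ne', sub_self,
          exp_zero, mul_one]
    _ ≤ (exp (k / c / 2) * c) ^ k := by
        gcongr
        rw [div_le_iff₀ ht]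
        have := le_exp_half_mul_log_one_add hκ.le
        rw [div_le_iff₀ hc] at this
        linarith
    _ = exp (k ^ 2 / (2 * n * p)) * c ^ k := by
        rw [mul_rpow (exp_pos _).le hc.le, ← exp_mul]
        congr 2
        ring

end Binomial

theorem stmt12
    {Ω : Type*} [MeasurableSpace Ω] (μ : MeasureTheory.Measure Ω)
    [MeasureTheory.IsProbabilityMeasure μ]
    (n : ℕ) (hn : 1 ≤ n) (p : ℝ) (hp : 0 < p) (hp1 : p < 1)
    (U : Ω → ℕ) (hUm : Measurable U)
    (hU : ∀ k : ℕ, μ {ω | U ω = k}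
      = ENNReal.ofReal ((n.choose k : ℝ) * p ^ k * (1 - p) ^ (n - k)))
    (k : ℝ) (hk : 0 < k) :
    (∫ ω, (U ω : ℝ) ^ k ∂μ) ≤ Real.exp (k ^ 2 / (2 * n * p)) * ((n : ℝ) * p) ^ k ∧
      (∀ α : ℝ, 0 < α → α * k ^ 2 ≤ n * p →
        (∫ ω, (U ω : ℝ) ^ k ∂μ) ≤ Real.exp (1 / (2 * α)) * ((n : ℝ) * p) ^ k) := by
  have hmoment : ∫ ω, (U ω : ℝ) ^ k ∂μ
      = ∑ m ∈ range (n + 1), binomialWeight n p m * (m : ℝ) ^ k :=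
    integral_comp_eq_sum_of_measure_eq (s := range (n + 1)) hUm (binomialWeight_nonneg n hp.le hp1.le) hU
      (fun m hm => binomialWeight_eq_zero_of_lt n (by simpa using hm))
      (fun m : ℕ => (m : ℝ) ^ k)
  have hbound : ∫ ω, (U ω : ℝ) ^ k ∂μ ≤ exp (k ^ 2 / (2 * n * p)) * ((n : ℝ) * p) ^ k :=
    hmoment ▸ sum_binomialWeight_mul_rpow_le_exp_mul n hn hp hp1.le hk
  refine ⟨hbound, fun α hα hαk => hbound.trans ?_⟩
  have hnp : 0 < (n : ℝ) * p := mul_pos (by exact_mod_cast hn) hp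
  gcongr exp ?_ * _
  rw [div_le_div_iff₀ (by positivity) (by positivity)]
  linarith
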